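/- With the cut-off $\Psi$ as above, $\iint_{\mathrm{supp}\,\nabla\Psi}\frac{dx\,dt}{t}\le C_n|Q|$ for a dimensional constant $C_n$. -/

import Mathlib

open MeasureTheory Set
open scoped ENNReal

/-- The axis-parallel cube with center `c` and side length `l`. -/
def cube {n : ℕ} (c : EuclideanSpace ℝ (Fin n)) (l : ℝ) : Set (EuclideanSpace ℝ (Fin n)) :=
  {x | ∀ i, |x i - c i| ≤ l / 2}

lemma aux_Icc_integral (a b : ℝ) (ha : 0 ≤ a) (hb : b ≤ 2 * a) :
    ∫⁻ t in Icc a b, ENNReal.ofReal (1 / t) ≤ 1 := by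
  rcases eq_or_lt_of_le ha with h0 | h0
  · have : volume (Icc a b) = 0 := by
      rw [Real.volume_Icc]
      simp only [ENNReal.ofReal_eq_zero]
      linarith
    rw [setLIntegral_measure_zero _ _ this]; exact zero_le_one
  · calc ∫⁻ t in Icc a b, ENNReal.ofReal (1 / t)
        ≤ ∫⁻ _ in Icc a b, ENNReal.ofReal (1 / a) := by
          refine setLIntegral_mono measurable_const fun t ht => ?_
          exact ENNReal.ofReal_le_ofReal (by
            apply one_div_le_one_div_of_le h0 ht.1)
      _ = ENNReal.ofReal (1 / a) * volume (Icc a b) := setLIntegral_const _ _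
      _ ≤ ENNReal.ofReal (1 / a) * ENNReal.ofReal a := by
          rw [Real.volume_Icc]
          exact mul_le_mul_right (ENNReal.ofReal_le_ofReal (by linarith)) _
      _ = ENNReal.ofReal (1 / a * a) := (ENNReal.ofReal_mul (by positivity)).symm
      _ = 1 := by rw [one_div_mul_cancel (ne_of_gt h0)]; simp

lemma cube_closed {n : ℕ} (c : EuclideanSpace ℝ (Fin n)) (L : ℝ) : IsClosed (cube c L) := by
  have : cube c L = ⋂ i, {x : EuclideanSpace ℝ (Fin n) | |x i - c i| ≤ L / 2} := by
    ext x; simp [cube, mem_iInter]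
  rw [this]
  refine isClosed_iInter fun i => ?_
  exact isClosed_le (((EuclideanSpace.proj i).continuous.sub continuous_const).abs) continuous_const

lemma volume_cube {n : ℕ} (c : EuclideanSpace ℝ (Fin n)) (L : ℝ) (hL : 0 ≤ L) :
    volume (cube c L) = ENNReal.ofReal (L ^ n) := by
  have hpre : cube c L = ((MeasurableEquiv.toLp 2 (Fin n → ℝ)).symm) ⁻¹'
      (univ.pi fun i => Icc (c i - L / 2) (c i + L / 2)) := by
    ext x
    simp only [cube, mem_setOf_eq, mem_preimage, mem_pi, mem_univ, forall_true_left, mem_Icc]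
    have hco : ∀ i, ((MeasurableEquiv.toLp 2 (Fin n → ℝ)).symm) x i = x i := fun i => rfl
    simp only [hco]
    constructor
    · intro h i
      have := h i; rw [abs_le] at this
      constructor <;> linarith [this.1, this.2]
    · intro h i
      rw [abs_le]
      constructor <;> linarith [(h i).1, (h i).2]
  rw [hpre,
    (EuclideanSpace.volume_preserving_symm_measurableEquiv_toLp (Fin n)).measure_preimage
      (MeasurableSet.univ_pi fun i => measurableSet_Icc).nullMeasurableSet,
    volume_pi_pi]
  simp only [Real.volume_Icc]
  rw [Finset.prod_congr rfl (fun i _ => by rw [show c i + L/2 - (c i - L/2) = L by ring]),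
    Finset.prod_const, ENNReal.ofReal_pow hL]
  simp

lemma coord_dist_le {n : ℕ} (x y : EuclideanSpace ℝ (Fin n)) (i : Fin n) :
    |x i - y i| ≤ dist x y := by
  rw [EuclideanSpace.dist_eq]
  have h1 : |x i - y i| = Real.sqrt (dist (x i) (y i) ^ 2) := by
    rw [Real.sqrt_sq dist_nonneg, Real.dist_eq]
  rw [h1]
  apply Real.sqrt_le_sqrt
  exact Finset.single_le_sum (f := fun j => dist (x j) (y j) ^ 2)
    (fun j _ => by positivity) (Finset.mem_univ i)


/-- The Carleson-type estimate `∬_{supp ∇Ψ} dx dt / t ≤ Cₙ |Q|` for the adapted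
cut-off function `Ψ`, with a dimensional constant. -/
theorem cutoff_support_carleson (n : ℕ) :
    ∃ C : ℝ, 0 < C ∧
      ∀ (Φ : ℝ → ℝ), ContDiff ℝ (⊤ : ℕ∞) Φ → (∀ r, 0 ≤ Φ r ∧ Φ r ≤ 1) →
        (∀ r ≤ (1:ℝ)/16, Φ r = 1) → (∀ r > (1:ℝ)/8, Φ r = 0) →
      ∀ (η ε l : ℝ) (c : EuclideanSpace ℝ (Fin n)),
        0 < η → η < 1/2 → 0 < ε → 0 < l →
      ∀ F : Set (EuclideanSpace ℝ (Fin n)), IsClosed F → F.Nonempty → F ⊆ cube c l →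
      ∀ Ψ : EuclideanSpace ℝ (Fin n) × ℝ → ℝ,
        (Ψ = fun q => Φ (Metric.infDist q.1 F / (η * q.2)) * Φ (q.2 / (32 * l)) *
              (1 - Φ (q.2 / (16 * ε)))) →
        ∫⁻ q in tsupport (fun q => fderiv ℝ Ψ q) ∩
              {q : EuclideanSpace ℝ (Fin n) × ℝ | 0 < q.2},
            ENNReal.ofReal (1 / q.2) ∂volume
          ≤ ENNReal.ofReal (C * l ^ n) := by
  refine ⟨3 * 2 ^ n, by positivity, ?_⟩
  intro Φ hΦsm hΦ01 hΦ1 hΦ0 η ε l c hη hη2 hε hl F hFcl hFne hFQ Ψ hΨ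
  set δ : EuclideanSpace ℝ (Fin n) → ℝ := fun x => Metric.infDist x F with hδdef
  have hδcont : Continuous δ := Metric.continuous_infDist_pt F
  have hδnn : ∀ x, 0 ≤ δ x := fun x => Metric.infDist_nonneg
  set Q2 : Set (EuclideanSpace ℝ (Fin n)) := cube c (2 * l) with hQ2def
  set K : EuclideanSpace ℝ (Fin n) → Set ℝ := fun x =>
    Icc (8 * δ x / η) (16 * δ x / η) ∪ Icc (2 * l) (4 * l) ∪ Icc ε (2 * ε) with hKdef
  set T : Set ((EuclideanSpace ℝ (Fin n)) × ℝ) := {q | q.1 ∈ Q2 ∧ q.2 ∈ K q.1} with hTdef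
  -- T is closed
  have hTclosed : IsClosed T := by
    have h1 : IsClosed {q : (EuclideanSpace ℝ (Fin n)) × ℝ | q.1 ∈ Q2} := (cube_closed c (2*l)).preimage continuous_fst
    have ca : Continuous fun q : (EuclideanSpace ℝ (Fin n)) × ℝ => 8 * δ q.1 / η :=
      ((continuous_const.mul (hδcont.comp continuous_fst)).div_const η)
    have cb : Continuous fun q : (EuclideanSpace ℝ (Fin n)) × ℝ => 16 * δ q.1 / η :=
      ((continuous_const.mul (hδcont.comp continuous_fst)).div_const η)
    have h2 : IsClosed {q : (EuclideanSpace ℝ (Fin n)) × ℝ | q.2 ∈ Icc (8 * δ q.1 / η) (16 * δ q.1 / η)} := by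
      simp only [mem_Icc, setOf_and]
      exact (isClosed_le ca continuous_snd).inter (isClosed_le continuous_snd cb)
    have h3 : IsClosed {q : (EuclideanSpace ℝ (Fin n)) × ℝ | q.2 ∈ Icc (2*l) (4*l)} := by
      simp only [mem_Icc, setOf_and]
      exact (isClosed_le continuous_const continuous_snd).inter
        (isClosed_le continuous_snd continuous_const)
    have h4 : IsClosed {q : (EuclideanSpace ℝ (Fin n)) × ℝ | q.2 ∈ Icc ε (2*ε)} := by
      simp only [mem_Icc, setOf_and]
      exact (isClosed_le continuous_const continuous_snd).inter
        (isClosed_le continuous_snd continuous_const)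
    have : T = {q : (EuclideanSpace ℝ (Fin n)) × ℝ | q.1 ∈ Q2} ∩
        ({q : (EuclideanSpace ℝ (Fin n)) × ℝ | q.2 ∈ Icc (8 * δ q.1 / η) (16 * δ q.1 / η)} ∪
          ({q : (EuclideanSpace ℝ (Fin n)) × ℝ | q.2 ∈ Icc (2*l) (4*l)} ∪ {q : (EuclideanSpace ℝ (Fin n)) × ℝ | q.2 ∈ Icc ε (2*ε)})) := by
      ext q
      simp only [hTdef, hKdef, mem_setOf_eq, mem_inter_iff, mem_union]
      tauto
    rw [this]
    exact h1.inter (h2.union (h3.union h4))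
  -- fderiv vanishes off T (for positive t)
  have hconst : ∀ (q : (EuclideanSpace ℝ (Fin n)) × ℝ) (W : Set ((EuclideanSpace ℝ (Fin n)) × ℝ)) (k : ℝ), IsOpen W → q ∈ W →
      (∀ p ∈ W, Ψ p = k) → fderiv ℝ Ψ q = 0 := by
    intro q W k hW hq h
    have heq : Ψ =ᶠ[nhds q] fun _ => k := Filter.eventually_of_mem (hW.mem_nhds hq) h
    rw [heq.fderiv_eq, fderiv_const_apply]
  have hzero : ∀ q : (EuclideanSpace ℝ (Fin n)) × ℝ, 0 < q.2 → q ∉ T → fderiv ℝ Ψ q = 0 := by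
    rintro ⟨x, t⟩ ht hqT
    simp only at ht
    by_cases h4l : 4 * l < t
    · refine hconst _ {p : (EuclideanSpace ℝ (Fin n)) × ℝ | 4 * l < p.2} 0
        (isOpen_lt continuous_const continuous_snd) h4l fun p hp => ?_
      have : Φ (p.2 / (32 * l)) = 0 := by
        refine hΦ0 _ ?_
        rw [gt_iff_lt, lt_div_iff₀ (by positivity : (0:ℝ) < 32 * l)]
        simp only [mem_setOf_eq] at hp; linarith
      rw [hΨ]; simp only [this, mul_zero, zero_mul]
    push_neg at h4l
    by_cases hδ8 : η * t / 8 < δ x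
    · refine hconst _ {p : (EuclideanSpace ℝ (Fin n)) × ℝ | 0 < p.2 ∧ η * p.2 / 8 < δ p.1} 0
        ((isOpen_lt continuous_const continuous_snd).inter
          (isOpen_lt ((continuous_const.mul continuous_snd).div_const 8 : Continuous fun p : (EuclideanSpace ℝ (Fin n)) × ℝ => η * p.2 / 8) (hδcont.comp continuous_fst)))
        ⟨ht, hδ8⟩ fun p hp => ?_
      obtain ⟨hp1, hp2⟩ := hp
      have : Φ (δ p.1 / (η * p.2)) = 0 := by
        refine hΦ0 _ ?_
        rw [gt_iff_lt, lt_div_iff₀ (by positivity : (0:ℝ) < η * p.2)]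
        linarith
      rw [hΨ]; simp only [show Φ (Metric.infDist p.1 F / (η * p.2)) = 0 from this, zero_mul]
    push_neg at hδ8
    -- x ∈ Q2
    have hδx : δ x < l / 2 := by nlinarith
    obtain ⟨y, hyF, hxy⟩ := (Metric.infDist_lt_iff hFne).mp hδx
    have hxQ2 : x ∈ Q2 := by
      intro i
      have h1 := coord_dist_le x y i
      have h2 := hFQ hyF i
      have h3 : |x i - c i| ≤ |x i - y i| + |y i - c i| := abs_sub_le _ _ _
      have : |x i - c i| ≤ 2 * l / 2 := by linarith
      exact this
    have htK : t ∉ K x := fun hK' => hqT ⟨hxQ2, hK'⟩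
    simp only [hKdef, mem_union, mem_Icc, not_or, not_and_or, not_le] at htK
    obtain ⟨⟨hK1, hK2⟩, hK3⟩ := htK
    have ht1 : 8 * δ x / η ≤ t := by
      rw [div_le_iff₀ hη]; nlinarith
    have hδ16 : δ x < η * t / 16 := by
      rcases hK1 with h | h
      · linarith
      · rw [div_lt_iff₀ hη] at h; nlinarith
    have ht2l : t < 2 * l := by
      rcases hK2 with h | h
      · exact h
      · linarith
    rcases hK3 with htε | htε
    · -- t < ε : third factor vanishes
      refine hconst _ {p : (EuclideanSpace ℝ (Fin n)) × ℝ | 0 < p.2 ∧ p.2 < ε} 0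
        ((isOpen_lt continuous_const continuous_snd).inter
          (isOpen_lt continuous_snd continuous_const)) ⟨ht, htε⟩ fun p hp => ?_
      obtain ⟨hp1, hp2⟩ := hp
      have : Φ (p.2 / (16 * ε)) = 1 := by
        refine hΦ1 _ ?_
        rw [div_le_iff₀ (by positivity : (0:ℝ) < 16 * ε)]
        linarith
      rw [hΨ]; simp only [this, sub_self, mul_zero]
    · -- 2ε < t : Ψ ≡ 1 nearby
      refine hconst _ {p : (EuclideanSpace ℝ (Fin n)) × ℝ | δ p.1 < η * p.2 / 16 ∧ 2 * ε < p.2 ∧ p.2 < 2 * l} 1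
        (((isOpen_lt (hδcont.comp continuous_fst)
            ((continuous_const.mul continuous_snd).div_const 16 : Continuous fun p : (EuclideanSpace ℝ (Fin n)) × ℝ => η * p.2 / 16)).inter
          ((isOpen_lt continuous_const continuous_snd).inter
            (isOpen_lt continuous_snd continuous_const))))
        ⟨hδ16, htε, ht2l⟩ fun p hp => ?_
      obtain ⟨hp1, hp2, hp3⟩ := hp
      have hpt : 0 < p.2 := lt_trans (by positivity) hp2
      have f1 : Φ (δ p.1 / (η * p.2)) = 1 := by
        refine hΦ1 _ ?_
        rw [div_le_iff₀ (by positivity : (0:ℝ) < η * p.2)]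
        linarith
      have f2 : Φ (p.2 / (32 * l)) = 1 := by
        refine hΦ1 _ ?_
        rw [div_le_iff₀ (by positivity : (0:ℝ) < 32 * l)]
        linarith
      have f3 : Φ (p.2 / (16 * ε)) = 0 := by
        refine hΦ0 _ ?_
        rw [gt_iff_lt, lt_div_iff₀ (by positivity : (0:ℝ) < 16 * ε)]
        linarith
      rw [hΨ]; simp only [show Φ (Metric.infDist p.1 F / (η * p.2)) = 1 from f1, f2, f3, sub_zero, mul_one, one_mul]
  -- support inclusion
  have hsub : tsupport (fun q => fderiv ℝ Ψ q) ∩ {q : (EuclideanSpace ℝ (Fin n)) × ℝ | 0 < q.2} ⊆ T := by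
    have hsupp : Function.support (fun q => fderiv ℝ Ψ q) ⊆ T ∪ {q : (EuclideanSpace ℝ (Fin n)) × ℝ | q.2 ≤ 0} := by
      intro q hq
      by_contra h
      simp only [mem_union, mem_setOf_eq, not_or, not_le] at h
      exact hq (hzero q h.2 h.1)
    have hcl : tsupport (fun q => fderiv ℝ Ψ q) ⊆ T ∪ {q : (EuclideanSpace ℝ (Fin n)) × ℝ | q.2 ≤ 0} :=
      closure_minimal hsupp (hTclosed.union (isClosed_le continuous_snd continuous_const))
    rintro q ⟨h1, h2⟩
    rcases hcl h1 with h | h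
    · exact h
    · exact absurd (show 0 < q.2 from h2) (not_lt.mpr h)
  -- measurability facts
  have hQ2meas : MeasurableSet Q2 := (cube_closed c (2*l)).measurableSet
  have hTmeas : MeasurableSet T := hTclosed.measurableSet
  set f : (EuclideanSpace ℝ (Fin n)) × ℝ → ℝ≥0∞ := fun q => ENNReal.ofReal (1 / q.2) with hfdef
  have hfmeas : Measurable f := (measurable_const.div measurable_snd).ennreal_ofReal
  have hKmeas : ∀ x, MeasurableSet (K x) :=
    fun x => (measurableSet_Icc.union measurableSet_Icc).union measurableSet_Icc
  -- the estimate
  calc ∫⁻ q in tsupport (fun q => fderiv ℝ Ψ q) ∩ {q : (EuclideanSpace ℝ (Fin n)) × ℝ | 0 < q.2}, f q ∂volume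
      ≤ ∫⁻ q in T, f q ∂volume := lintegral_mono_set hsub
    _ = ∫⁻ q, T.indicator f q ∂volume := (lintegral_indicator hTmeas f).symm
    _ = ∫⁻ x, ∫⁻ t, T.indicator f (x, t) ∂volume ∂volume := by
        rw [Measure.volume_eq_prod]
        exact lintegral_prod _ (hfmeas.indicator hTmeas).aemeasurable
    _ ≤ ∫⁻ x, Q2.indicator (fun _ => (3 : ℝ≥0∞)) x ∂volume := by
        refine lintegral_mono fun x => ?_
        by_cases hx : x ∈ Q2
        · have heq : (fun t => T.indicator f (x, t)) =
              (K x).indicator (fun t => ENNReal.ofReal (1 / t)) := by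
            funext t
            by_cases ht : t ∈ K x
            · have : (x, t) ∈ T := ⟨hx, ht⟩
              simp [indicator_of_mem this, indicator_of_mem ht, hfdef]
            · have : (x, t) ∉ T := fun h => ht h.2
              simp [indicator_of_notMem this, indicator_of_notMem ht]
          rw [indicator_of_mem hx, heq]
          rw [lintegral_indicator (hKmeas x)]
          have e1 := aux_Icc_integral (8 * δ x / η) (16 * δ x / η)
            (by have := hδnn x; positivity) (le_of_eq (by ring))
          have e2 := aux_Icc_integral (2*l) (4*l) (by positivity) (by linarith)
          have e3 := aux_Icc_integral ε (2*ε) (le_of_lt hε) (by linarith)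
          calc ∫⁻ t in K x, ENNReal.ofReal (1 / t) ∂volume
              ≤ (∫⁻ t in Icc (8 * δ x / η) (16 * δ x / η) ∪ Icc (2*l) (4*l),
                  ENNReal.ofReal (1 / t) ∂volume) +
                ∫⁻ t in Icc ε (2*ε), ENNReal.ofReal (1 / t) ∂volume :=
                lintegral_union_le _ _ _
            _ ≤ ((∫⁻ t in Icc (8 * δ x / η) (16 * δ x / η), ENNReal.ofReal (1 / t) ∂volume) +
                  ∫⁻ t in Icc (2*l) (4*l), ENNReal.ofReal (1 / t) ∂volume) +
                ∫⁻ t in Icc ε (2*ε), ENNReal.ofReal (1 / t) ∂volume :=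
                add_le_add_left (lintegral_union_le _ _ _) _
            _ ≤ (1 + 1) + 1 := add_le_add (add_le_add e1 e2) e3
            _ = 3 := by norm_num
        · have : ∀ t : ℝ, T.indicator f (x, t) = 0 := by
            intro t
            exact indicator_of_notMem (fun h => hx h.1) f
          simp only [this, lintegral_zero, indicator_of_notMem hx]
          exact le_refl 0
    _ = 3 * volume Q2 := lintegral_indicator_const hQ2meas 3
    _ = ENNReal.ofReal (3 * 2 ^ n * l ^ n) := by
        rw [hQ2def, volume_cube c (2*l) (by positivity)]
        rw [show (3 : ℝ≥0∞) = ENNReal.ofReal 3 by norm_num, ← ENNReal.ofReal_mul (by norm_num)]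
        congr 1
        rw [mul_pow]
        ring
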